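/- arXiv:1806.00170 — 3 statements merged into one kernel-verified Lean document; each statement's English description precedes it below -/
import Mathlib

section
/- Corner Lemma: Let F be an S-constructible persistence module valued in a skeletally small abelian category C, let I = [p,q) ∈ Dgm, and let ε > 0 be such that the box □_ε I is nonempty. If q ≠ ∞, then Σ_{J ∈ □_ε I} F̃(J) = dF([p+ε, q−ε)) − dF([p+ε, q+ε)) + dF([p−ε, q+ε)) − dF([p−ε, q−ε)). If q = ∞, then Σ_{J ∈ □_ε I} F̃(J) = dF([p+ε, ∞)) − dF([p−ε, ∞)). -/
open CategoryTheory CategoryTheory.Limits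
open scoped Classical ENNReal

noncomputable section

universe v u

/-! ## The poset of intervals -/

/-- `Rbar` is `ℝ ∪ {∞}`. -/
abbrev Rbar := WithTop ℝ

/-- An element of the poset `Dgm`: an interval `[p, q)` with `p ≤ q` in `ℝ ∪ {∞}`. -/
structure PDInterval where
  p : Rbar
  q : Rbar
  hle : p ≤ q

namespace PDInterval

/-- `I.Sub J` means `I ⊆ J` as intervals, i.e. `J.p ≤ I.p` and `I.q ≤ J.q`. -/
def Sub (I J : PDInterval) : Prop := J.p ≤ I.p ∧ I.q ≤ J.q

/-- The diagonal `Δ ⊆ Dgm` consists of the empty intervals `[p, p)`. -/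
def onDiag (I : PDInterval) : Prop := I.p = I.q

/-- The interval `[a, b)` with real endpoints. -/
def mk' (a b : ℝ) (h : a ≤ b) : PDInterval := ⟨(a : Rbar), (b : Rbar), by exact_mod_cast h⟩

/-- The interval `[a, ∞)`. -/
def mkInf (a : ℝ) : PDInterval := ⟨(a : Rbar), ⊤, le_top⟩

/-- Membership in `Dgm(S)`, where `S` is a finite set of reals together (implicitly)
with `∞`: both endpoints of `I` lie in `S ∪ {∞}`. -/
def memDgmS (S : Finset ℝ) (I : PDInterval) : Prop :=
  (I.p = ⊤ ∨ ∃ s ∈ S, I.p = (s : Rbar)) ∧ (I.q = ⊤ ∨ ∃ s ∈ S, I.q = (s : Rbar))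

/-- The `ε`-box around an interval `I = [p, q)`: all intervals `[r, s)` with
`p - ε < r ≤ p + ε` and `q - ε ≤ s < q + ε`, declared empty if `q - ε ≤ p + ε`.
For `q = ∞` it consists of the intervals `[r, ∞)` with `p - ε < r ≤ p + ε`. -/
def box (ε : ℝ) (I : PDInterval) : Set PDInterval :=
  if I.p = ⊤ then ∅
  else if I.q = ⊤ then
    { J | J.q = ⊤ ∧ ∃ r : ℝ, J.p = (r : Rbar) ∧
        I.p.untopD 0 - ε < r ∧ r ≤ I.p.untopD 0 + ε }
  else if I.q.untopD 0 - ε ≤ I.p.untopD 0 + ε then ∅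
  else
    { J | ∃ r s : ℝ, J.p = (r : Rbar) ∧ J.q = (s : Rbar) ∧
        I.p.untopD 0 - ε < r ∧ r ≤ I.p.untopD 0 + ε ∧
        I.q.untopD 0 - ε ≤ s ∧ s < I.q.untopD 0 + ε }

/-- The distance between two endpoints in `ℝ ∪ {∞}`; it is `∞` if exactly one of the two
endpoints is `∞`. -/
def edist' : Rbar → Rbar → ℝ≥0∞ := fun a b =>
  if a = ⊤ then (if b = ⊤ then 0 else ⊤)
  else if b = ⊤ then ⊤
  else ENNReal.ofReal |a.untopD 0 - b.untopD 0|

/-- The distance `max (|p₁ - p₂|, |q₁ - q₂|)` between two intervals. -/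
def pairDist (I J : PDInterval) : ℝ≥0∞ := max (edist' I.p J.p) (edist' I.q J.q)

end PDInterval

/-! ## Matchings and the bottleneck distance -/

section Matching

variable {G : Type*} [AddCommGroup G]

/-- A matching between two finitely supported functions `Y₁ Y₂ : Dgm → G`:
a map `γ : Dgm × Dgm → G` whose row sums give `Y₁` off the diagonal and whose column
sums give `Y₂` off the diagonal. -/
def IsMatching (Y₁ Y₂ : PDInterval → G) (γ : PDInterval → PDInterval → G) : Prop :=
  (∀ I : PDInterval, ¬ I.onDiag →
    (Function.support (γ I)).Finite ∧ Y₁ I = ∑ᶠ J, γ I J) ∧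
  (∀ J : PDInterval, ¬ J.onDiag →
    (Function.support (fun I => γ I J)).Finite ∧ Y₂ J = ∑ᶠ I, γ I J)

/-- The norm of a matching: the supremum of `max (|p₁ - p₂|, |q₁ - q₂|)` over all pairs
`I = [p₁, q₁)`, `J = [p₂, q₂)` with `γ I J ≠ 0`. -/
def matchingNorm (γ : PDInterval → PDInterval → G) : ℝ≥0∞ :=
  ⨆ (I : PDInterval) (J : PDInterval) (_ : γ I J ≠ 0), PDInterval.pairDist I J

/-- The bottleneck distance between two persistence diagrams: the infimum of the norms
of all matchings between them. -/
def bottleneckDist (Y₁ Y₂ : PDInterval → G) : ℝ≥0∞ :=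
  ⨅ (γ : PDInterval → PDInterval → G) (_ : IsMatching Y₁ Y₂ γ), matchingNorm γ

end Matching

/-! ## Persistence modules, constructibility, interleavings -/

section PersMod

variable (C : Type u) [Category.{v} C]

/-- A persistence module `F : (ℝ, ≤) → C` is `S`-constructible (for a finite set
`S = {s₁ < ⋯ < s_k} ⊆ ℝ`, to which `∞` is implicitly adjoined) if `F p` is a zero object
for `p < s₁` and `F (p ≤ q)` is an isomorphism whenever no element of `S` lies in `(p, q]`
and some element of `S` is `≤ p`. -/
def IsConstructibleOn (F : ℝ ⥤ C) (S : Finset ℝ) : Prop :=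
  (∀ p : ℝ, (∀ s ∈ S, p < s) → IsZero (F.obj p)) ∧
  (∀ (p q : ℝ) (h : p ≤ q), (∃ s ∈ S, s ≤ p) → (∀ s ∈ S, s ≤ p ∨ q < s) →
    IsIso (F.map (homOfLE h)))

/-- A persistence module is constructible if it is `S`-constructible for some finite `S`. -/
def IsConstructible (F : ℝ ⥤ C) : Prop := ∃ S : Finset ℝ, IsConstructibleOn C F S

/-- The underlying type of the poset `ℝ ×_ε {0, 1}`. -/
def InterPoset (_ : ℝ) : Type := ℝ × Bool

namespace InterPoset

variable (ε : ℝ)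

/-- The partial order on `ℝ ×_ε {0, 1}`: `(p, t) ≤ (q, s)` iff `t = s` and `p ≤ q`, or
`t ≠ s` and `p + ε ≤ q`.  (For `ε < 0` we use `max ε 0` in place of `ε` so that the
order is well defined; all statements only use `ε ≥ 0`, where this agrees with the paper.) -/
instance : Preorder (InterPoset ε) where
  le x y := x.1 + (if x.2 = y.2 then 0 else max ε 0) ≤ y.1
  le_refl x := by simp
  le_trans x y z h₁ h₂ := by
    have hm : (0 : ℝ) ≤ max ε 0 := le_max_right _ _
    by_cases h12 : x.2 = y.2 <;> by_cases h23 : y.2 = z.2 <;>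
      [skip; skip; skip; have hxz : x.2 = z.2 := by
        revert h12 h23; cases x.2 <;> cases y.2 <;> cases z.2 <;> simp] <;>
      simp_all <;> linarith [le_max_right ε (0:ℝ)]

/-- The embedding `ι₀ : ℝ → ℝ ×_ε {0, 1}`, `p ↦ (p, 0)`. -/
def iota0 : ℝ ⥤ InterPoset ε :=
  Monotone.functor (f := fun p => ((p, false) : InterPoset ε))
    (fun _ _ h => by simpa [(· ≤ ·)] using h)

/-- The embedding `ι₁ : ℝ → ℝ ×_ε {0, 1}`, `p ↦ (p, 1)`. -/
def iota1 : ℝ ⥤ InterPoset ε :=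
  Monotone.functor (f := fun p => ((p, true) : InterPoset ε))
    (fun _ _ h => by simpa [(· ≤ ·)] using h)

end InterPoset

/-- Two persistence modules `F` and `G` are `ε`-interleaved if there is a functor
`Φ : ℝ ×_ε {0, 1} → C` whose restrictions along `ι₀` and `ι₁` are naturally isomorphic
to `F` and `G` respectively. -/
def Interleaved (F G : ℝ ⥤ C) (ε : ℝ) : Prop :=
  ∃ Φ : InterPoset ε ⥤ C,
    Nonempty (InterPoset.iota0 ε ⋙ Φ ≅ F) ∧ Nonempty (InterPoset.iota1 ε ⋙ Φ ≅ G)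

/-- The interleaving distance: the infimum of all `ε ≥ 0` such that `F` and `G` are
`ε`-interleaved (`∞` if there is no interleaving). -/
def interleavingDist (F G : ℝ ⥤ C) : ℝ≥0∞ :=
  sInf { x : ℝ≥0∞ | ∃ ε : ℝ, 0 ≤ ε ∧ Interleaved C F G ε ∧ x = ENNReal.ofReal ε }

end PersMod

/-! ## The Grothendieck group -/

section K0

variable (C : Type u) [Category.{v} C] [Limits.HasZeroMorphisms C]

/-- The subgroup of relations coming from short exact sequences `0 → a → b → c → 0`:
it is generated by the elements `[b] - ([a] + [c])`. -/
def sesRelations : AddSubgroup (FreeAbelianGroup C) :=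
  AddSubgroup.closure { x | ∃ S : ShortComplex C, S.ShortExact ∧
    x = FreeAbelianGroup.of S.X₂ - (FreeAbelianGroup.of S.X₁ + FreeAbelianGroup.of S.X₃) }

/-- The Grothendieck group of `C`: the free abelian group on the objects of `C` modulo one
relation `[b] = [a] + [c]` for each short exact sequence `0 → a → b → c → 0`.  (Isomorphic
objects automatically get identified, via the short exact sequences `0 → a → b → 0 → 0`.) -/
def K0 : Type u := FreeAbelianGroup C ⧸ sesRelations C

instance : AddCommGroup (K0 C) := by unfold K0; infer_instance

/-- The class `[a] ∈ K0 C` of an object `a` of `C`. -/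
def K0.mk (a : C) : K0 C := QuotientAddGroup.mk (FreeAbelianGroup.of a)

/-- The translation-invariant partial order on the Grothendieck group:
`x ⪯ y` iff `y - x = [c]` for some object `c` of `C`. -/
def K0.le (x y : K0 C) : Prop := ∃ c : C, y - x = K0.mk C c

end K0

/-! ## The rank function and the persistence diagram -/

section Rank

variable (C : Type u) [Category.{v} C] [Abelian C]

/-- The class in `K0 C` of the image of the structure map `F (a ≤ b)`. -/
def K0.imageClass (F : ℝ ⥤ C) {a b : ℝ} (h : a ≤ b) : K0 C :=
  K0.mk C (Limits.image (F.map (homOfLE h)))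

/-- The hypothesis on the auxiliary constant `δ > 0` used to define the rank function of an
`S`-constructible module: `s_{i-1} < s_i - δ` for consecutive elements of `S`. -/
def GoodDelta (S : Finset ℝ) (δ : ℝ) : Prop :=
  0 < δ ∧ ∀ s ∈ S, ∀ s' ∈ S, s < s' → s < s' - δ

/-- The rank function `dF : Dgm → K0 C` of an `S`-constructible persistence module `F`
(relative to the auxiliary constant `δ`): for `I = [p, s)` with `s ∈ S` it is the class of
the image of `F (p ≤ s - δ)`; for `I = [p, ∞)` it is the class of the image of `F (p ≤ z)`
for `z ≥ max p (max S)`; and for all other `I = [p, q)` it is the class of the image of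
`F (p ≤ q)`.  (Endpoints are adjusted, using constructibility, so that the formula makes
sense for every interval of `Dgm`.) -/
def rankFn (F : ℝ ⥤ C) (S : Finset ℝ) (δ : ℝ) (I : PDInterval) : K0 C :=
  let M : ℝ := (if h : S.Nonempty then S.max' h else 0) + 1
  let lp : ℝ := I.p.untopD M
  let q' : ℝ :=
    if I.q = ⊤ then max lp M
    else if I.q.untopD 0 ∈ S then I.q.untopD 0 - δ else I.q.untopD 0
  K0.imageClass C F (min_le_right lp q')

/-- `Ft` is the persistence diagram of the `S`-constructible module `F` (with rank function
taken relative to `δ`): it is finitely supported and satisfies the Möbius inversion formula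
`dF I = ∑_{J ⊇ I} Ft J` for every interval `I ∈ Dgm`. -/
def IsPersDiagramOf (F : ℝ ⥤ C) (S : Finset ℝ) (δ : ℝ) (Ft : PDInterval → K0 C) : Prop :=
  (Function.support Ft).Finite ∧
  ∀ I : PDInterval, rankFn C F S δ I = ∑ᶠ (J : PDInterval) (_ : I.Sub J), Ft J

end Rank

end


/-! The box `□_ε [p, q)` consists of the intervals whose left endpoint lies in `(p - ε, p + ε]`
and whose right endpoint lies in `[q - ε, q + ε)`. Such a half-open rectangle is a signed
combination of the four quadrants `{J | J.p ≤ a ∧ b ≤ J.q}` at its corners, and the sum of `F̃`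
over the quadrant at `(a, b)` is `dF [a, b)` by Möbius inversion. -/

open Set Function

section CornerSums

variable {α β γ G : Type*} [AddCommGroup G] [LinearOrder β] [LinearOrder γ] {f : α → G}

theorem finsum_mem_sdiff_of_subset (hf : (support f).Finite) {s t : Set α} (hts : t ⊆ s) :
    ∑ᶠ i ∈ s \ t, f i = ∑ᶠ i ∈ s, f i - ∑ᶠ i ∈ t, f i := by
  have hsplit := finsum_mem_inter_add_sdiff' (f := f) (s := s) t (hf.subset inter_subset_right)
  rw [inter_eq_right.2 hts] at hsplit
  exact eq_sub_of_add_eq' hsplit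

theorem finsum_mem_Ioc_strip (hf : (support f).Finite) (u : α → β) (P : α → Prop) {a b : β}
    (hab : a ≤ b) :
    ∑ᶠ x ∈ {x | u x ∈ Ioc a b ∧ P x}, f x =
      ∑ᶠ x ∈ {x | u x ≤ b ∧ P x}, f x - ∑ᶠ x ∈ {x | u x ≤ a ∧ P x}, f x := by
  have hstrip : {x | u x ∈ Ioc a b ∧ P x} = {x | u x ≤ b ∧ P x} \ {x | u x ≤ a ∧ P x} := by
    ext x
    simp only [mem_Ioc, mem_sdiff, mem_ofPred_eq, not_and', not_le]
    tauto
  rw [hstrip, finsum_mem_sdiff_of_subset hf]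
  exact fun x ⟨hxa, hx⟩ => ⟨hxa.trans hab, hx⟩

theorem finsum_mem_Ico_strip (hf : (support f).Finite) (P : α → Prop) (v : α → γ) {c d : γ}
    (hcd : c ≤ d) :
    ∑ᶠ x ∈ {x | P x ∧ v x ∈ Ico c d}, f x =
      ∑ᶠ x ∈ {x | P x ∧ c ≤ v x}, f x - ∑ᶠ x ∈ {x | P x ∧ d ≤ v x}, f x := by
  have hstrip : {x | P x ∧ v x ∈ Ico c d} = {x | P x ∧ c ≤ v x} \ {x | P x ∧ d ≤ v x} := by
    ext x
    simp only [mem_Ico, mem_sdiff, mem_ofPred_eq, not_and, not_le]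
    tauto
  rw [hstrip, finsum_mem_sdiff_of_subset hf]
  exact fun x ⟨hx, hxd⟩ => ⟨hx, hcd.trans hxd⟩

theorem finsum_mem_Ioc_Ico (hf : (support f).Finite) (u : α → β) (v : α → γ) {a b : β}
    {c d : γ} (hab : a ≤ b) (hcd : c ≤ d) :
    ∑ᶠ x ∈ {x | u x ∈ Ioc a b ∧ v x ∈ Ico c d}, f x =
      ∑ᶠ x ∈ {x | u x ≤ b ∧ c ≤ v x}, f x - ∑ᶠ x ∈ {x | u x ≤ b ∧ d ≤ v x}, f x +
        ∑ᶠ x ∈ {x | u x ≤ a ∧ d ≤ v x}, f x - ∑ᶠ x ∈ {x | u x ≤ a ∧ c ≤ v x}, f x := by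
  rw [finsum_mem_Ioc_strip hf u _ hab, finsum_mem_Ico_strip hf _ v hcd,
    finsum_mem_Ico_strip hf _ v hcd]
  abel

end CornerSums

namespace PDInterval

theorem box_mk' {ε p q : ℝ} (h : p ≤ q) (hpq : p + ε < q - ε) :
    box ε (mk' p q h) =
      {J | J.p ∈ Ioc ((p - ε : ℝ) : Rbar) (p + ε : ℝ) ∧
        J.q ∈ Ico ((q - ε : ℝ) : Rbar) (q + ε : ℝ)} := by
  ext J
  simp only [box, mk', WithTop.coe_ne_top, if_false, WithTop.untopD_coe, hpq.not_ge,
    ← WithTop.image_coe_Ioc, ← WithTop.image_coe_Ico, mem_image, mem_ofPred_eq, mem_Ioc, mem_Ico]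
  constructor
  · rintro ⟨r, s, hr, hs, hr₁, hr₂, hs₁, hs₂⟩
    exact ⟨⟨r, ⟨hr₁, hr₂⟩, hr.symm⟩, ⟨s, ⟨hs₁, hs₂⟩, hs.symm⟩⟩
  · rintro ⟨⟨r, ⟨hr₁, hr₂⟩, hr⟩, ⟨s, ⟨hs₁, hs₂⟩, hs⟩⟩
    exact ⟨r, s, hr.symm, hs.symm, hr₁, hr₂, hs₁, hs₂⟩

theorem box_mkInf (ε p : ℝ) :
    box ε (mkInf p) = {J | J.p ∈ Ioc ((p - ε : ℝ) : Rbar) (p + ε : ℝ) ∧ ⊤ ≤ J.q} := by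
  ext J
  simp only [box, mkInf, WithTop.coe_ne_top, if_false, if_true, WithTop.untopD_coe,
    ← WithTop.image_coe_Ioc, mem_image, mem_ofPred_eq, mem_Ioc, top_le_iff]
  constructor
  · rintro ⟨hq, r, hr, hr₁, hr₂⟩
    exact ⟨⟨r, ⟨hr₁, hr₂⟩, hr.symm⟩, hq⟩
  · rintro ⟨⟨r, ⟨hr₁, hr₂⟩, hr⟩, hq⟩
    exact ⟨hq, r, hr.symm, hr₁, hr₂⟩

end PDInterval

/-- **Corner Lemma** (Lemma 5.2): Let `F` be an `S`-constructible persistence module valued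
in a skeletally small abelian category, `I = [p, q)` an interval and `ε > 0` such that the
box `□_ε I` is nonempty.  If `q ≠ ∞` then
`∑_{J ∈ □_ε I} F̃(J) = dF([p+ε, q-ε)) - dF([p+ε, q+ε)) + dF([p-ε, q+ε)) - dF([p-ε, q-ε))`,
and if `q = ∞` then `∑_{J ∈ □_ε I} F̃(J) = dF([p+ε, ∞)) - dF([p-ε, ∞))`. -/
theorem corner_lemma {C : Type u} [Category.{v} C] [Abelian C]
    (F : ℝ ⥤ C) (S : Finset ℝ) (δ : ℝ)
    (Ft : PDInterval → K0 C) (hFt : IsPersDiagramOf C F S δ Ft)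
    (ε : ℝ) (hε : 0 < ε) :
    (∀ (p q : ℝ) (hpq : p + ε < q - ε),
      ∑ᶠ J ∈ PDInterval.box ε (PDInterval.mk' p q (by linarith)), Ft J =
        rankFn C F S δ (PDInterval.mk' (p + ε) (q - ε) (by linarith)) -
        rankFn C F S δ (PDInterval.mk' (p + ε) (q + ε) (by linarith)) +
        rankFn C F S δ (PDInterval.mk' (p - ε) (q + ε) (by linarith)) -
        rankFn C F S δ (PDInterval.mk' (p - ε) (q - ε) (by linarith))) ∧
    (∀ p : ℝ,
      ∑ᶠ J ∈ PDInterval.box ε (PDInterval.mkInf p), Ft J =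
        rankFn C F S δ (PDInterval.mkInf (p + ε)) -
        rankFn C F S δ (PDInterval.mkInf (p - ε))) := by
  obtain ⟨hfin, hmob⟩ := hFt
  have hε' (x : ℝ) : ((x - ε : ℝ) : Rbar) ≤ (x + ε : ℝ) := by
    exact_mod_cast (by linarith : x - ε ≤ x + ε)
  refine ⟨fun p q hpq => ?_, fun p => ?_⟩
  -- Each quadrant `{J | J.p ≤ a ∧ b ≤ J.q}` is `{J | [a, b).Sub J}` by definition.
  · rw [PDInterval.box_mk' _ hpq,
      finsum_mem_Ioc_Ico hfin PDInterval.p PDInterval.q (hε' p) (hε' q), hmob, hmob, hmob, hmob]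
    rfl
  · rw [PDInterval.box_mkInf, finsum_mem_Ioc_strip hfin PDInterval.p _ (hε' p), hmob, hmob]
    rfl
end

section
/- Let e : A₁ → A₂, f : A₂ → B₂, and g : B₂ → B₁ be morphisms in an abelian category, and let h = g ∘ f ∘ e : A₁ → B₁. Let I = image(f ∘ e), regarded as a subobject of B₂, and let K = I ⊓ ker(g). Then K and I are subobjects of image(f) with K ≤ I, and image(h) is isomorphic to the quotient I/K. In particular, image(h) is isomorphic to a quotient of a subobject of image(f). -/
open CategoryTheory CategoryTheory.Limits

noncomputable section

universe v u

/-- Let `e : A₁ ⟶ A₂`, `f : A₂ ⟶ B₂` and `g : B₂ ⟶ B₁` be morphisms in an abelian category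
and let `h = g ∘ f ∘ e`.  Let `I = image (f ∘ e)` as a subobject of `B₂` and let
`K = I ⊓ ker g`.  Then `K` and `I` are subobjects of `image f` with `K ≤ I`, and `image h`
is isomorphic to the quotient `I / K`, i.e. to the cokernel of the induced monomorphism
`K ⟶ I`. -/
theorem image_iso_quotient_of_subobject_of_image {C : Type u} [Category.{v} C] [Abelian C]
    {A₁ A₂ B₂ B₁ : C} (e : A₁ ⟶ A₂) (f : A₂ ⟶ B₂) (g : B₂ ⟶ B₁) :
    -- `K ≤ I`
    ((imageSubobject (e ≫ f) ⊓ kernelSubobject g : Subobject B₂) ≤ imageSubobject (e ≫ f)) ∧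
    -- `K` and `I` are subobjects of `image f`
    ((imageSubobject (e ≫ f) ⊓ kernelSubobject g : Subobject B₂) ≤ imageSubobject f) ∧
    (imageSubobject (e ≫ f) ≤ imageSubobject f) ∧
    -- `image h ≅ I / K`
    Nonempty (image (e ≫ f ≫ g) ≅
      cokernel (Subobject.ofLE (imageSubobject (e ≫ f) ⊓ kernelSubobject g)
        (imageSubobject (e ≫ f)) inf_le_left)) := by
  set I : Subobject B₂ := imageSubobject (e ≫ f) with hI
  set K : Subobject B₂ := I ⊓ kernelSubobject g with hK
  have hIf : I ≤ imageSubobject f := imageSubobject_comp_le e f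
  refine ⟨inf_le_left, le_trans inf_le_left hIf, hIf, ?_⟩
  have hpa : factorThruImageSubobject (e ≫ f) ≫ I.arrow = e ≫ f :=
    imageSubobject_arrow_comp _
  have heq : e ≫ f ≫ g = factorThruImageSubobject (e ≫ f) ≫ (I.arrow ≫ g) := by
    conv_lhs => rw [← Category.assoc, ← hpa]
    rw [Category.assoc]
  have hmono : Mono (image.preComp (factorThruImageSubobject (e ≫ f)) (I.arrow ≫ g)) :=
    mono_of_mono_fac (image.preComp_ι _ (I.arrow ≫ g))
  have : IsIso (image.preComp (factorThruImageSubobject (e ≫ f)) (I.arrow ≫ g)) :=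
    @isIso_of_mono_of_epi _ _ _ _ _ _ hmono _
  have hK0 : K.arrow ≫ g = 0 := by
    have h2 := Subobject.ofLE_arrow (inf_le_right : K ≤ kernelSubobject g)
    rw [← h2, Category.assoc, kernelSubobject_arrow_comp, comp_zero]
  have hlift0 : Subobject.ofLE K I inf_le_left ≫ I.arrow ≫ g = 0 := by
    rw [← Category.assoc, Subobject.ofLE_arrow, hK0]
  set u : (K : C) ⟶ kernel (I.arrow ≫ g) := kernel.lift (I.arrow ≫ g) _ hlift0 with hu
  have hufac : u ≫ kernel.ι (I.arrow ≫ g) = Subobject.ofLE K I inf_le_left := kernel.lift_ι _ _ _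
  have hfac : K.Factors (kernel.ι (I.arrow ≫ g) ≫ I.arrow) := by
    rw [hK]
    refine (Subobject.inf_factors _).2 ⟨Subobject.factors_comp_arrow _, ?_⟩
    exact kernelSubobject_factors g _ (by rw [Category.assoc, kernel.condition])
  set v : kernel (I.arrow ≫ g) ⟶ (K : C) := K.factorThru _ hfac with hv
  have hvfac : v ≫ K.arrow = kernel.ι (I.arrow ≫ g) ≫ I.arrow := Subobject.factorThru_arrow _ _ _
  have hvof : v ≫ Subobject.ofLE K I inf_le_left = kernel.ι (I.arrow ≫ g) := by
    rw [← cancel_mono I.arrow, Category.assoc, Subobject.ofLE_arrow, hvfac]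
  have huv : u ≫ v = 𝟙 _ := by
    rw [← cancel_mono K.arrow, Category.assoc, hvfac, ← Category.assoc, hufac,
      Subobject.ofLE_arrow, Category.id_comp]
  have hvu : v ≫ u = 𝟙 _ := by
    rw [← cancel_mono (kernel.ι (I.arrow ≫ g)), Category.assoc, hufac, hvof, Category.id_comp]
  refine ⟨?_⟩
  calc image (e ≫ f ≫ g)
      ≅ image (factorThruImageSubobject (e ≫ f) ≫ (I.arrow ≫ g)) := image.eqToIso heq
    _ ≅ image (I.arrow ≫ g) := asIso (image.preComp _ (I.arrow ≫ g))
    _ ≅ Abelian.coimage (I.arrow ≫ g) := (Abelian.coimageIsoImage' (I.arrow ≫ g)).symm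
    _ ≅ cokernel (Subobject.ofLE K I inf_le_left) :=
        cokernel.mapIso _ _ ⟨v, u, hvu, huv⟩ (Iso.refl _)
          (by rw [Iso.refl_hom, Category.comp_id]; exact hvof.symm)

end
end

section
/- Möbius inversion for constructible rank-type functions: Let G be an abelian group, let S = {s₁ < … < s_k < ∞} ⊆ ℝ ∪ {∞} be a finite set, and let d : Dgm → G be a function such that d(I) = d(Ī) whenever Ī is the smallest (under inclusion) interval of Dgm(S) containing I, and d(I) = 0 whenever no interval of Dgm(S) contains I. Then there exists a unique finitely supported function F̃ : Dgm → G satisfying d(I) = Σ_{J ∈ Dgm, J ⊇ I} F̃(J) for every I ∈ Dgm; moreover F̃ vanishes outside Dgm(S) and is given by F̃([s_i, s_j)) = d([s_i,s_j)) − d([s_i,s_{j+1})) + d([s_{i−1},s_{j+1})) − d([s_{i−1},s_j)) and F̃([s_i, ∞)) = d([s_i,∞)) − d([s_{i−1},∞)), with the conventions s_{k+1} = ∞ and s₀ any value strictly less than s₁. -/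
open CategoryTheory CategoryTheory.Limits
open scoped Classical ENNReal

/-- `Ibar` is the smallest interval of `Dgm(S)` (under inclusion) containing `I`. -/
def IsSmallestContaining (S : Finset ℝ) (I Ibar : PDInterval) : Prop :=
  Ibar.memDgmS S ∧ I.Sub Ibar ∧ ∀ J : PDInterval, J.memDgmS S → I.Sub J → Ibar.Sub J

/-! Ordered by inclusion, `Dgm` is a poset, and on any poset a finitely supported function is
determined by its sums over principal upper sets: at a maximal point of the support of the
difference of two such functions, that sum is the value of the difference itself.  Over a finite
subposet such as `Dgm(S)`, any prescribed upper sums are attained by a function supported there: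
remove a minimal element, solve on the rest, and put the missing amount on that element.  For an
arbitrary interval `I`, the intervals of `Dgm(S)` containing `I` are those containing the smallest
such interval `Ī` if there is one, and there are none otherwise, which is what the two hypotheses
on `d` account for.  The explicit formulas are inclusion–exclusion: inside `Dgm(S)` the intervals
strictly containing `[a, b)` are those containing `[a, b')` or `[a', b)`, and those containing
both are those containing `[a', b')`. -/

section UpperSum

open Finset Function

variable {α G : Type*} [PartialOrder α] [AddCommGroup G]

noncomputable def upperSum (f : α → G) (x : α) : G := ∑ᶠ (y) (_ : x ≤ y), f y

theorem upperSum_eq_sum {f : α → G} {P : Finset α} (hf : support f ⊆ P) (x : α) :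
    upperSum f x = ∑ y ∈ P with x ≤ y, f y :=
  finsum_cond_eq_sum_of_cond_iff f fun hy =>
    ⟨fun hxy => mem_filter.2 ⟨hf hy, hxy⟩, fun h => (mem_filter.1 h).2⟩

theorem upperSum_congr {f : α → G} {x x' : α}
    (h : ∀ y, f y ≠ 0 → (x ≤ y ↔ x' ≤ y)) :
    upperSum f x = upperSum f x' := by
  refine finsum_congr fun y => ?_
  by_cases hy : f y = 0
  · simp [hy]
  · simp only [h y hy]

theorem upperSum_eq_zero {f : α → G} {x : α} (h : ∀ y, f y ≠ 0 → ¬ x ≤ y) :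
    upperSum f x = 0 := by
  refine finsum_eq_zero_of_forall_eq_zero fun y => ?_
  by_cases hy : f y = 0
  · simp [hy]
  · simp [h y hy]

theorem eq_of_upperSum_eq {f g : α → G} (hf : (support f).Finite) (hg : (support g).Finite)
    (h : upperSum f = upperSum g) : f = g := by
  set P := (hf.union hg).toFinset
  have hfP : support f ⊆ P := by simp [P]
  have hgP : support g ⊆ P := by simp [P]
  have hsubP : support (f - g) ⊆ P := (support_sub f g).trans (Set.union_subset hfP hgP)
  have hzero : ∀ x, upperSum (f - g) x = 0 := fun x => by
    rw [upperSum_eq_sum hsubP, ← sub_eq_zero.2 (congrFun h x), upperSum_eq_sum hfP,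
      upperSum_eq_sum hgP]
    simp only [Pi.sub_apply, sum_sub_distrib]
  by_contra hne
  obtain ⟨m, hm⟩ := P.finite_toSet.subset hsubP |>.exists_maximal
    (support_nonempty_iff.2 (sub_ne_zero.2 hne))
  have hm_sum : upperSum (f - g) m = (f - g) m := by
    rw [upperSum, finsum_cond_eq_sum_of_cond_iff (f - g) (t := {m}) fun hy =>
      ⟨fun hmy => mem_singleton.2 (le_antisymm (hm.2 hy hmy) hmy),
        fun hy => (mem_singleton.1 hy).ge⟩, sum_singleton]
  exact hm.1 (hm_sum.symm.trans (hzero m))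

theorem exists_support_subset_upperSum_eq (P : Finset α) (d : α → G) :
    ∃ f : α → G, support f ⊆ P ∧ ∀ x ∈ P, upperSum f x = d x := by
  induction P using Finset.strongInduction with
  | H P ih =>
  rcases P.eq_empty_or_nonempty with rfl | hP
  · exact ⟨0, by simp, by simp⟩
  obtain ⟨m, hmP, hmin⟩ := P.exists_minimal hP
  obtain ⟨f, hf, hfd⟩ := ih (P.erase m) (erase_ssubset hmP)
  have hf' : support f ⊆ P := hf.trans (by simp)
  have hg : support (f + Pi.single m (d m - upperSum f m)) ⊆ P :=
    (support_add _ _).trans <| Set.union_subset hf' <|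
      Pi.support_single_subset.trans (by simpa using hmP)
  refine ⟨_, hg, fun x hx => ?_⟩
  rw [upperSum_eq_sum hg]
  simp only [Pi.add_apply]
  rw [sum_add_distrib, ← upperSum_eq_sum hf', sum_pi_single']
  by_cases hxm : x = m
  · subst hxm
    simp [hmP]
  · have hxm' : ¬ x ≤ m := fun h => hxm (le_antisymm h (hmin hx h))
    simp [hxm', hfd x (mem_erase.2 ⟨hxm, hx⟩)]

theorem upperSum_eq_add_upperSum_sub {f : α → G} {P : Finset α} (hf : support f ⊆ P)
    {x y z w : α} (hx : x ∈ P) (hlt : ∀ J ∈ P, x < J ↔ y ≤ J ∨ z ≤ J)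
    (hyz : ∀ J ∈ P, y ≤ J ∧ z ≤ J ↔ w ≤ J) :
    upperSum f x = f x + upperSum f y + upperSum f z - upperSum f w := by
  have hle : {J ∈ P | x ≤ J} = insert x {J ∈ P | x < J} := by
    ext J
    by_cases hJ : J = x
    · simp [hJ, hx]
    · simp [hJ, le_iff_lt_or_eq, Ne.symm hJ]
  have hor : {J ∈ P | x < J} = {J ∈ P | y ≤ J} ∪ {J ∈ P | z ≤ J} := by
    rw [← filter_or]
    exact filter_congr hlt
  have hand : {J ∈ P | y ≤ J} ∩ {J ∈ P | z ≤ J} = {J ∈ P | w ≤ J} := by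
    rw [← filter_and]
    exact filter_congr hyz
  simp only [upperSum_eq_sum hf]
  rw [hle, sum_insert (by simp), hor, ← hand, add_assoc, add_sub_assoc, ← sum_union_inter,
    add_sub_cancel_right]

end UpperSum

namespace PDInterval

open Finset Function

attribute [ext] PDInterval

instance : PartialOrder PDInterval where
  le := Sub
  le_refl _ := ⟨le_rfl, le_rfl⟩
  le_trans _ _ _ hIJ hJK := ⟨hJK.1.trans hIJ.1, hIJ.2.trans hJK.2⟩
  le_antisymm _ _ hIJ hJI := PDInterval.ext (le_antisymm hJI.1 hIJ.1) (le_antisymm hIJ.2 hJI.2)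

noncomputable def endpoints (S : Finset ℝ) : Finset Rbar := insert ⊤ (S.image (↑))

theorem memDgmS_iff {S : Finset ℝ} {I : PDInterval} :
    I.memDgmS S ↔ I.p ∈ endpoints S ∧ I.q ∈ endpoints S := by
  simp [memDgmS, endpoints, eq_comm]

theorem finite_setOf_memDgmS (S : Finset ℝ) : {I : PDInterval | I.memDgmS S}.Finite := by
  refine Set.Finite.of_finite_image (f := fun I => (I.p, I.q)) ?_ fun I _ J _ h => ?_
  · refine (endpoints S ×ˢ endpoints S).finite_toSet.subset ?_
    rintro _ ⟨I, hI, rfl⟩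
    simpa [memDgmS_iff] using hI
  · simp only [Prod.mk.injEq] at h
    exact PDInterval.ext h.1 h.2

noncomputable def dgm (S : Finset ℝ) : Finset PDInterval := (finite_setOf_memDgmS S).toFinset

theorem mem_dgm {S : Finset ℝ} {I : PDInterval} : I ∈ dgm S ↔ I.memDgmS S :=
  Set.Finite.mem_toFinset _

theorem exists_isSmallestContaining {S : Finset ℝ} {I : PDInterval}
    (h : ∃ J, J.memDgmS S ∧ I ≤ J) : ∃ Ibar, IsSmallestContaining S I Ibar := by
  obtain ⟨J, hJ, hIJ⟩ := h
  set L := {t ∈ endpoints S | t ≤ I.p}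
  set R := {t ∈ endpoints S | I.q ≤ t}
  have hL : L.Nonempty := ⟨J.p, mem_filter.2 ⟨(memDgmS_iff.1 hJ).1, hIJ.1⟩⟩
  have hR : R.Nonempty := ⟨J.q, mem_filter.2 ⟨(memDgmS_iff.1 hJ).2, hIJ.2⟩⟩
  obtain ⟨hLS, hLp⟩ := mem_filter.1 (L.max'_mem hL)
  obtain ⟨hRS, hRq⟩ := mem_filter.1 (R.min'_mem hR)
  refine ⟨⟨L.max' hL, R.min' hR, hLp.trans (I.hle.trans hRq)⟩, memDgmS_iff.2 ⟨hLS, hRS⟩,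
    ⟨hLp, hRq⟩, fun K hK hIK => ⟨?_, ?_⟩⟩
  · exact L.le_max' _ (mem_filter.2 ⟨(memDgmS_iff.1 hK).1, hIK.1⟩)
  · exact R.min'_le _ (mem_filter.2 ⟨(memDgmS_iff.1 hK).2, hIK.2⟩)

theorem eq_upperSum_of_eqOn_dgm {G : Type*} [AddCommGroup G] {S : Finset ℝ}
    {d Ft : PDInterval → G}
    (hconst : ∀ I Ibar : PDInterval, IsSmallestContaining S I Ibar → d I = d Ibar)
    (hzero : ∀ I : PDInterval, (∀ J : PDInterval, J.memDgmS S → ¬ I.Sub J) → d I = 0)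
    (hsupp : support Ft ⊆ dgm S) (hFt : ∀ I ∈ dgm S, upperSum Ft I = d I) (I : PDInterval) :
    d I = upperSum Ft I := by
  by_cases h : ∃ J, J.memDgmS S ∧ I ≤ J
  · obtain ⟨Ibar, hbar⟩ := exists_isSmallestContaining h
    rw [hconst I Ibar hbar, ← hFt Ibar (mem_dgm.2 hbar.1)]
    exact upperSum_congr fun J hJ => ⟨le_trans hbar.2.1, hbar.2.2 J (mem_dgm.1 (hsupp hJ))⟩
  · rw [hzero I fun J hJ hIJ => h ⟨J, hJ, hIJ⟩,
      upperSum_eq_zero fun J hJ hIJ => h ⟨J, mem_dgm.1 (hsupp hJ), hIJ⟩]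

theorem mk_le_and_mk_le_iff {p p' q q' : Rbar} (hp : p' ≤ p) (hq : q ≤ q') (h₁ : p ≤ q')
    (h₂ : p' ≤ q) (h₃ : p' ≤ q') {J : PDInterval} :
    (⟨p, q', h₁⟩ : PDInterval) ≤ J ∧ (⟨p', q, h₂⟩ : PDInterval) ≤ J ↔
      (⟨p', q', h₃⟩ : PDInterval) ≤ J :=
  ⟨fun ⟨⟨_, hq'⟩, hp', _⟩ => ⟨hp', hq'⟩,
    fun ⟨hp', hq'⟩ => ⟨⟨hp'.trans hp, hq'⟩, hp', hq.trans hq'⟩⟩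

theorem p_le_of_p_lt {S : Finset ℝ} {a a' : ℝ} (hpred : ∀ s ∈ S, s < a → s ≤ a')
    {J : PDInterval} (hJ : J.memDgmS S) (h : J.p < a) : J.p ≤ a' := by
  obtain ⟨hJp | ⟨s, hs, hJp⟩, -⟩ := hJ
  · exact absurd h (by simp [hJp])
  · rw [hJp] at h ⊢
    exact WithTop.coe_le_coe.2 (hpred s hs (WithTop.coe_lt_coe.1 h))

theorem mk'_lt_iff {S : Finset ℝ} {a b a' : ℝ} {b' : Rbar} (hab : a ≤ b) (ha' : a' < a)
    (hb' : (b : Rbar) < b') (hpred : ∀ s ∈ S, s < a → s ≤ a')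
    (hsucc : ∀ s ∈ S, b < s → b' ≤ s) {J : PDInterval} (hJ : J.memDgmS S) :
    mk' a b hab < J ↔
      (⟨a, b', (WithTop.coe_le_coe.2 hab).trans hb'.le⟩ : PDInterval) ≤ J ∨
        mk' a' b (ha'.le.trans hab) ≤ J := by
  have hy : mk' a b hab < ⟨a, b', (WithTop.coe_le_coe.2 hab).trans hb'.le⟩ :=
    lt_of_le_not_ge ⟨le_rfl, hb'.le⟩ fun h => hb'.not_ge h.2
  have hz : mk' a b hab < mk' a' b (ha'.le.trans hab) :=
    lt_of_le_not_ge ⟨WithTop.coe_le_coe.2 ha'.le, le_rfl⟩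
      fun h => ha'.not_ge (WithTop.coe_le_coe.1 h.1)
  refine ⟨fun hlt => ?_, fun h => h.elim hy.trans_le hz.trans_le⟩
  · obtain ⟨⟨hp, hq⟩, hne⟩ := lt_iff_le_and_ne.1 hlt
    rcases hp.lt_or_eq with hp | hp
    · exact Or.inr ⟨p_le_of_p_lt hpred hJ hp, hq⟩
    · have hq : (b : Rbar) < J.q := hq.lt_of_ne fun h => hne (PDInterval.ext hp.symm h)
      refine Or.inl ⟨hp.le, ?_⟩
      obtain ⟨-, hJq | ⟨s, hs, hJq⟩⟩ := hJ
      · simp [hJq]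
      · rw [hJq] at hq ⊢
        exact hsucc s hs (WithTop.coe_lt_coe.1 hq)

theorem mkInf_lt_iff {S : Finset ℝ} {a a' : ℝ} (ha' : a' < a)
    (hpred : ∀ s ∈ S, s < a → s ≤ a') {J : PDInterval} (hJ : J.memDgmS S) :
    mkInf a < J ↔ mkInf a' ≤ J := by
  have hlt' : mkInf a < mkInf a' :=
    lt_of_le_not_ge ⟨WithTop.coe_le_coe.2 ha'.le, le_rfl⟩
      fun h => ha'.not_ge (WithTop.coe_le_coe.1 h.1)
  refine ⟨fun hlt => ?_, hlt'.trans_le⟩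
  obtain ⟨⟨hp, hq⟩, hne⟩ := lt_iff_le_and_ne.1 hlt
  have hp : J.p < a := hp.lt_of_ne fun h => hne (PDInterval.ext h.symm (top_le_iff.1 hq).symm)
  exact ⟨p_le_of_p_lt hpred hJ hp, hq⟩

end PDInterval

theorem forall_le_of_pred_cases {S : Finset ℝ} {a a' : ℝ}
    (h : (∀ s ∈ S, a ≤ s) ∨ (a' ∈ S ∧ ∀ s ∈ S, s < a → s ≤ a')) :
    ∀ s ∈ S, s < a → s ≤ a' :=
  h.elim (fun h s hs hsa => absurd (h s hs) hsa.not_ge) And.right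

theorem coe_lt_and_forall_le_of_succ_cases {S : Finset ℝ} {b : ℝ} {b' : Rbar}
    (h : (b' = ⊤ ∧ ∀ s ∈ S, s ≤ b) ∨
      (∃ s' ∈ S, b' = (s' : Rbar) ∧ b < s' ∧ ∀ s ∈ S, b < s → s' ≤ s)) :
    (b : Rbar) < b' ∧ ∀ s ∈ S, b < s → b' ≤ s := by
  rcases h with ⟨rfl, hmax⟩ | ⟨s', -, rfl, hbs', hmin⟩
  · exact ⟨WithTop.coe_lt_top b, fun s hs hbs => absurd (hmax s hs) hbs.not_ge⟩
  · exact ⟨WithTop.coe_lt_coe.2 hbs', fun s hs hbs => WithTop.coe_le_coe.2 (hmin s hs hbs)⟩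

/-- **Möbius inversion for constructible rank-type functions**: let `G` be an abelian group,
`S` a finite subset of `ℝ` (with `∞` implicitly adjoined) and `d : Dgm → G` a function which
only depends on the smallest interval of `Dgm(S)` containing the argument, and which vanishes
on intervals contained in no interval of `Dgm(S)`.  Then there is a unique finitely supported
`Ft : Dgm → G` with `d(I) = ∑_{J ⊇ I} Ft(J)` for all `I`; moreover `Ft` vanishes outside
`Dgm(S)` and is given by the explicit four-corner (resp. two-corner) formulas, where for
`b ∈ S` the value `b'` is the successor of `b` in `S` (or `∞` if `b = max S`) and `a'` is
the predecessor of `a` in `S` (or any value `< min S`). -/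
theorem mobius_inversion_of_constructible {G : Type*} [AddCommGroup G] (S : Finset ℝ)
    (d : PDInterval → G)
    (hconst : ∀ I Ibar : PDInterval, IsSmallestContaining S I Ibar → d I = d Ibar)
    (hzero : ∀ I : PDInterval, (∀ J : PDInterval, J.memDgmS S → ¬ I.Sub J) → d I = 0) :
    ∃ Ft : PDInterval → G,
      -- `Ft` is finitely supported and satisfies the Möbius inversion formula …
      (((Function.support Ft).Finite ∧
          ∀ I : PDInterval, d I = ∑ᶠ (J : PDInterval) (_ : I.Sub J), Ft J) ∧
        -- … and is the unique such function
        (∀ Ft' : PDInterval → G,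
          ((Function.support Ft').Finite ∧
            ∀ I : PDInterval, d I = ∑ᶠ (J : PDInterval) (_ : I.Sub J), Ft' J) → Ft' = Ft)) ∧
      -- `Ft` vanishes outside `Dgm(S)`
      (∀ I : PDInterval, ¬ I.memDgmS S → Ft I = 0) ∧
      -- the four-corner formula for `Ft([a, b))`, `a ≤ b` in `S`
      (∀ a ∈ S, ∀ b ∈ S, ∀ hab : a ≤ b,
        ∀ (b' : Rbar) (hbb' : (b : Rbar) ≤ b') (a' : ℝ) (ha' : a' < a),
        ((b' = ⊤ ∧ ∀ s ∈ S, s ≤ b) ∨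
          (∃ s' ∈ S, b' = (s' : Rbar) ∧ b < s' ∧ ∀ s ∈ S, b < s → s' ≤ s)) →
        ((∀ s ∈ S, a ≤ s) ∨ (a' ∈ S ∧ ∀ s ∈ S, s < a → s ≤ a')) →
        Ft (PDInterval.mk' a b hab) =
          d (PDInterval.mk' a b hab)
          - d ⟨(a : Rbar), b', le_trans (by exact_mod_cast hab) hbb'⟩
          + d ⟨(a' : Rbar), b',
              le_trans (by exact_mod_cast (ha'.le.trans hab)) hbb'⟩
          - d (PDInterval.mk' a' b (by linarith))) ∧
      -- the two-corner formula for `Ft([a, ∞))`, `a ∈ S`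
      (∀ a ∈ S, ∀ (a' : ℝ), a' < a →
        ((∀ s ∈ S, a ≤ s) ∨ (a' ∈ S ∧ ∀ s ∈ S, s < a → s ≤ a')) →
        Ft (PDInterval.mkInf a) = d (PDInterval.mkInf a) - d (PDInterval.mkInf a')) := by
  open PDInterval in
  obtain ⟨Ft, hsupp, hFt⟩ := exists_support_subset_upperSum_eq (dgm S) d
  have hsum : ∀ I, d I = upperSum Ft I := eq_upperSum_of_eqOn_dgm hconst hzero hsupp hFt
  have hfin : (Function.support Ft).Finite := (dgm S).finite_toSet.subset hsupp
  refine ⟨Ft, ⟨⟨hfin, hsum⟩, fun Ft' ⟨hfin', hsum'⟩ => eq_of_upperSum_eq hfin' hfin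
      (funext fun I => (hsum' I).symm.trans (hsum I))⟩,
    fun I hI => Function.notMem_support.1 fun hFtI => hI (mem_dgm.1 (hsupp hFtI)), ?_, ?_⟩
  · intro a ha b hb hab b' hbb' a' ha' hB hA
    obtain ⟨hb', hsucc⟩ := coe_lt_and_forall_le_of_succ_cases hB
    have key := upperSum_eq_add_upperSum_sub hsupp
      (mem_dgm.2 ⟨Or.inr ⟨a, ha, rfl⟩, Or.inr ⟨b, hb, rfl⟩⟩)
      (fun J hJ => mk'_lt_iff hab ha' hb' (forall_le_of_pred_cases hA) hsucc (mem_dgm.1 hJ))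
      (fun J _ => mk_le_and_mk_le_iff (WithTop.coe_le_coe.2 ha'.le) hbb' _ _
        ((WithTop.coe_le_coe.2 (ha'.le.trans hab)).trans hbb'))
    simp only [hsum]
    rw [key]
    abel
  · intro a ha a' ha' hA
    have key := upperSum_eq_add_upperSum_sub hsupp
      (mem_dgm.2 ⟨Or.inr ⟨a, ha, rfl⟩, Or.inl rfl⟩)
      (fun J hJ => (mkInf_lt_iff ha' (forall_le_of_pred_cases hA) (mem_dgm.1 hJ)).trans
        or_self_iff.symm)
      (fun J _ => and_self_iff)
    simp only [hsum]
    rw [key]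
    abel
end
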